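/- Let G = (V,E) be a finite simple graph with no isolated vertices. The independent set game Γ_G is population monotonic if and only if (i) every vertex of G has distance at most two to a pendant vertex, and (ii) no two non-pendant edges of type I are incident in G. -/

import Mathlib

open Finset

variable {V : Type*} [Fintype V] [DecidableEq V]

/-- `I` is an independent set of the graph `G`. -/
def Indep (G : SimpleGraph V) (I : Finset V) : Prop :=
  ∀ u ∈ I, ∀ v ∈ I, ¬ G.Adj u v

/-- The independence number of `G` restricted to the vertex set `U`,
i.e. `α(G[U])`: the maximum size of an independent set contained in `U`. -/
noncomputable def alphaOn (G : SimpleGraph V) (U : Set V) : ℕ :=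
  sSup {n : ℕ | ∃ I : Finset V, ↑I ⊆ U ∧ Indep G I ∧ I.card = n}

/-- `δ(v)`: the set of edges of `G` incident to the vertex `v`. -/
def incEdges (G : SimpleGraph V) (v : V) : Set (Sym2 V) :=
  {e | e ∈ G.edgeSet ∧ v ∈ e}

/-- `δ(v)` as a finset. -/
def incFinset (G : SimpleGraph V) [DecidableRel G.Adj] (v : V) : Finset (Sym2 V) :=
  G.edgeFinset.filter (fun e => v ∈ e)

/-- `V⟨S⟩`: the set of vertices of `G` all of whose incident edges lie in `S`. -/
def onlyInc (G : SimpleGraph V) (S : Set (Sym2 V)) : Set V :=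
  {v | incEdges G v ⊆ S}

/-- The characteristic function of the independent set game on `G`:
`γ(S) = α(G[V⟨S⟩])`. -/
noncomputable def gammaIS (G : SimpleGraph V) (S : Finset (Sym2 V)) : ℕ :=
  alphaOn G (onlyInc G ↑S)

/-- `x` is a population monotonic allocation scheme (PMAS) of the independent set
game on `G`: it is nonnegative, efficient, and monotone.  Coalitions are the
nonempty subsets of the player set `N = E(G)` (`G.edgeFinset`). -/
def IsPMAS (G : SimpleGraph V) [DecidableRel G.Adj]
    (x : Finset (Sym2 V) → Sym2 V → ℝ) : Prop :=
  (∀ S ⊆ G.edgeFinset, ∀ i ∈ S, 0 ≤ x S i) ∧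
  (∀ S ⊆ G.edgeFinset, S.Nonempty → ∑ i ∈ S, x S i = (gammaIS G S : ℝ)) ∧
  (∀ S T : Finset (Sym2 V), S ⊆ T → T ⊆ G.edgeFinset → S.Nonempty →
    ∀ i ∈ S, x S i ≤ x T i)

/-- An edge of `G` is pendant if one of its endpoints has degree one. -/
def PendantEdge (G : SimpleGraph V) [DecidableRel G.Adj] (e : Sym2 V) : Prop :=
  e ∈ G.edgeSet ∧ ∃ v ∈ e, G.degree v = 1

/-- A non-pendant edge of type I: not incident to any pendant edge. -/
def TypeI (G : SimpleGraph V) [DecidableRel G.Adj] (e : Sym2 V) : Prop :=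
  e ∈ G.edgeSet ∧ ¬ PendantEdge G e ∧
    ∀ f : Sym2 V, PendantEdge G f → ¬ ∃ w : V, w ∈ e ∧ w ∈ f

/-- A non-pendant edge of type II: incident to some pendant edge. -/
def TypeII (G : SimpleGraph V) [DecidableRel G.Adj] (e : Sym2 V) : Prop :=
  e ∈ G.edgeSet ∧ ¬ PendantEdge G e ∧
    ∃ f : Sym2 V, PendantEdge G f ∧ ∃ w : V, w ∈ e ∧ w ∈ f

/-- The vertex `v` has distance at most two to some pendant vertex of `G`. -/
def NearPendant (G : SimpleGraph V) [DecidableRel G.Adj] (v : V) : Prop :=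
  ∃ p : V, G.degree p = 1 ∧ ∃ w : G.Walk v p, w.length ≤ 2

/-!
For a coalition `S` call an edge *active* if it is a pendant edge of `S` or a type I edge with an
endpoint in `V⟨S⟩`, and call a vertex of `V⟨S⟩` *remote* if it lies on no pendant and no type I
edge. When no two type I edges meet, `γ(S)` is the number of active edges plus the number of
remote vertices: an independent subset of `V⟨S⟩` injects into the active edges and the remote
vertices, and conversely a suitable endpoint of each active edge together with the remote
vertices is independent. Paying `1` to each active edge and letting each remote vertex pay `1`
to a fixed incident edge is then a PMAS, since both terms only grow with `S`.

Conversely, take a path `a - b - c` of non-support vertices such that `V⟨δ(a) ∪ δ(b)⟩` and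
`V⟨δ(b) ∪ δ(c)⟩` are cliques. Then `γ(δ(a)) = γ(δ(a) ∪ δ(b)) = 1` forces a PMAS to give `0`,
in the coalition `δ(b)`, to every edge of `δ(b)` other than `ab`; symmetrically for `bc`, which
contradicts `γ(δ(b)) = 1`. Two incident type I edges `wa`, `wc` yield such a path: `a - w - c`
itself, unless some vertex `z` has neighbourhood `{a, w}` (or `{w, c}`), in which case
`a - z - w` (or `w - z - c`) works. Condition (i) follows from (ii): all edges at a vertex far
from the pendant vertices are of type I.
-/

set_option linter.unusedSectionVars false

variable {G : SimpleGraph V} [DecidableRel G.Adj]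

variable (G) in
def IsSupport (v : V) : Prop :=
  ∃ p, G.Adj v p ∧ G.degree p = 1

variable (G) in
def OnPendantOrTypeIEdge (v : V) : Prop :=
  ∃ e, (PendantEdge G e ∨ TypeI G e) ∧ v ∈ e

variable (G) in
def TypeIEdgesDisjoint : Prop :=
  ∀ ⦃e f : Sym2 V⦄ ⦃w : V⦄, TypeI G e → TypeI G f → w ∈ e → w ∈ f → e = f

lemma typeIEdgesDisjoint_iff : TypeIEdgesDisjoint G ↔
    ∀ e f : Sym2 V, TypeI G e → TypeI G f → e ≠ f → ¬ ∃ w : V, w ∈ e ∧ w ∈ f :=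
  ⟨fun h _ _ he hf hne ⟨_, hwe, hwf⟩ => hne (h he hf hwe hwf),
    fun h e f w he hf hwe hwf => by_contra fun hne => h e f he hf hne ⟨w, hwe, hwf⟩⟩

section Basic

lemma adj_mem_incEdges {u v : V} (h : G.Adj u v) : s(u, v) ∈ incEdges G u :=
  ⟨h, Sym2.mem_mk_left u v⟩

lemma mem_incFinset {v : V} {e : Sym2 V} : e ∈ incFinset G v ↔ e ∈ incEdges G v := by
  simp [incFinset, incEdges]

lemma coe_incFinset (v : V) : (incFinset G v : Set (Sym2 V)) = incEdges G v :=
  Set.ext fun _ => mem_incFinset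

lemma incFinset_subset_edgeFinset (v : V) : incFinset G v ⊆ G.edgeFinset :=
  filter_subset _ _

lemma onlyInc_mono {S T : Set (Sym2 V)} (h : S ⊆ T) : onlyInc G S ⊆ onlyInc G T :=
  fun _ hv => hv.trans h

lemma eq_of_mem_incEdges_of_degree_eq_one {p : V} (hp : G.degree p = 1) {e f : Sym2 V}
    (he : e ∈ incEdges G p) (hf : f ∈ incEdges G p) : e = f := by
  obtain ⟨u, rfl⟩ := Sym2.mem_iff_exists.mp he.2
  obtain ⟨u', rfl⟩ := Sym2.mem_iff_exists.mp hf.2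
  obtain ⟨w, -, hw⟩ := SimpleGraph.degree_eq_one_iff_existsUnique_adj.mp hp
  rw [hw u he.1, hw u' hf.1]

lemma isSupport_of_forall_adj_eq (hiso : ∀ v : V, G.degree v ≠ 0) {z t : V}
    (h : ∀ y, G.Adj z y → y = t) : IsSupport G t := by
  obtain ⟨y, hy⟩ := (G.degree_pos_iff_exists_adj z).mp (Nat.pos_of_ne_zero (hiso z))
  have hzt : G.Adj z t := h y hy ▸ hy
  exact ⟨z, hzt.symm, SimpleGraph.degree_eq_one_iff_existsUnique_adj.mpr ⟨t, hzt, h⟩⟩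

lemma TypeI.degree_ne_one {e : Sym2 V} {v : V} (he : TypeI G e) (hv : v ∈ e) :
    G.degree v ≠ 1 :=
  fun h => he.2.1 ⟨he.1, v, hv, h⟩

lemma TypeI.not_isSupport {e : Sym2 V} {v : V} (he : TypeI G e) (hv : v ∈ e) :
    ¬ IsSupport G v :=
  fun ⟨p, hvp, hp⟩ =>
    he.2.2 s(v, p) ⟨hvp, p, Sym2.mem_mk_right v p, hp⟩ ⟨v, hv, Sym2.mem_mk_left v p⟩

lemma typeI_iff {u v : V} (h : G.Adj u v) :
    TypeI G s(u, v) ↔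
      G.degree u ≠ 1 ∧ G.degree v ≠ 1 ∧ ¬ IsSupport G u ∧ ¬ IsSupport G v := by
  refine ⟨fun he => ?_, fun ⟨hu1, hv1, hsu, hsv⟩ => ⟨h, ?_, ?_⟩⟩
  · have hu := Sym2.mem_mk_left u v
    have hv := Sym2.mem_mk_right u v
    exact ⟨he.degree_ne_one hu, he.degree_ne_one hv, he.not_isSupport hu, he.not_isSupport hv⟩
  · rintro ⟨-, z, hz, hz1⟩
    rcases Sym2.mem_iff.mp hz with rfl | rfl
    exacts [hu1 hz1, hv1 hz1]
  · rintro f ⟨hf, q, hqf, hq1⟩ ⟨w, hwe, hwf⟩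
    have hw1 : G.degree w ≠ 1 := by
      rcases Sym2.mem_iff.mp hwe with rfl | rfl
      exacts [hu1, hv1]
    have hwq : w ≠ q := fun hwq => hw1 (hwq ▸ hq1)
    have hadj : G.Adj w q := by
      rw [(Sym2.mem_and_mem_iff hwq).mp ⟨hwf, hqf⟩] at hf
      exact hf
    rcases Sym2.mem_iff.mp hwe with rfl | rfl
    exacts [hsu ⟨q, hadj, hq1⟩, hsv ⟨q, hadj, hq1⟩]

lemma onPendantOrTypeIEdge_of_isSupport {v : V} (h : IsSupport G v) :
    OnPendantOrTypeIEdge G v :=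
  let ⟨p, hvp, hp⟩ := h
  ⟨s(v, p), Or.inl ⟨hvp, p, Sym2.mem_mk_right v p, hp⟩, Sym2.mem_mk_left v p⟩

lemma onPendantOrTypeIEdge_of_adj {u v : V} (h : G.Adj u v) (hu : ¬ IsSupport G u) :
    OnPendantOrTypeIEdge G v := by
  by_cases hv : IsSupport G v
  · exact onPendantOrTypeIEdge_of_isSupport hv
  refine ⟨s(u, v), ?_, Sym2.mem_mk_right u v⟩
  by_cases hp : PendantEdge G s(u, v)
  · exact Or.inl hp
  exact Or.inr ((typeI_iff h).mpr ⟨fun h1 => hp ⟨h, u, Sym2.mem_mk_left u v, h1⟩,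
    fun h1 => hp ⟨h, v, Sym2.mem_mk_right u v, h1⟩, hu, hv⟩)

end Basic

section Independence

lemma Indep.mono {I J : Finset V} (hJ : Indep G J) (h : I ⊆ J) : Indep G I :=
  fun u hu v hv => hJ u (h hu) v (h hv)

lemma le_alphaOn {U : Set V} {I : Finset V} (hIU : ↑I ⊆ U) (hI : Indep G I) :
    I.card ≤ alphaOn G U :=
  le_csSup ⟨Fintype.card V, fun _ ⟨J, _, _, hJ⟩ => hJ ▸ J.card_le_univ⟩ ⟨I, hIU, hI, rfl⟩

lemma alphaOn_le {U : Set V} {m : ℕ}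
    (h : ∀ I : Finset V, ↑I ⊆ U → Indep G I → I.card ≤ m) : alphaOn G U ≤ m :=
  csSup_le ⟨0, ∅, by simp [Indep]⟩ fun _ ⟨I, hIU, hI, hn⟩ => hn ▸ h I hIU hI

lemma alphaOn_eq_one_of_isClique {U : Set V} (hne : U.Nonempty) (hU : G.IsClique U) :
    alphaOn G U = 1 := by
  refine le_antisymm (alphaOn_le fun I hIU hI => card_le_one.mpr fun a ha b hb => ?_) ?_
  · by_contra hab
    exact hI a ha b hb (hU (hIU ha) (hIU hb) hab)
  · obtain ⟨a, ha⟩ := hne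
    simpa using le_alphaOn (G := G) (I := {a}) (by simpa using ha)
      (by simp [Indep])

lemma Indep.card_le_card_of_forall_exists_mem {J : Finset V} (hJ : Indep G J)
    {F : Finset (Sym2 V)} (hF : ∀ e ∈ F, e ∈ G.edgeSet) (hcov : ∀ v ∈ J, ∃ e ∈ F, v ∈ e) :
    J.card ≤ F.card := by
  classical
  let f : V → Sym2 V := fun v => if h : ∃ e ∈ F, v ∈ e then h.choose else s(v, v)
  have hf : ∀ v ∈ J, f v ∈ F ∧ v ∈ f v := fun v hv => by
    simp only [f, dif_pos (hcov v hv)]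
    exact (hcov v hv).choose_spec
  refine card_le_card_of_injOn f (fun v hv => (hf v hv).1) fun u hu v hv huv => ?_
  by_contra hne
  have hfv : f v = s(u, v) :=
    (Sym2.mem_and_mem_iff hne).mp ⟨huv ▸ (hf u hu).2, (hf v hv).2⟩
  have hadj : s(u, v) ∈ G.edgeSet := hfv ▸ hF _ (hf v hv).1
  exact hJ u hu v hv hadj

end Independence

section Sufficiency

open Classical in
noncomputable def activeEdges (G : SimpleGraph V) [DecidableRel G.Adj] (S : Finset (Sym2 V)) :
    Finset (Sym2 V) :=
  S.filter fun e => PendantEdge G e ∨ TypeI G e ∧ ∃ z ∈ e, z ∈ onlyInc G ↑S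

open Classical in
noncomputable def remoteVertices (G : SimpleGraph V) [DecidableRel G.Adj]
    (S : Finset (Sym2 V)) : Finset V :=
  univ.filter fun v => ¬ OnPendantOrTypeIEdge G v ∧ v ∈ onlyInc G ↑S

lemma mem_activeEdges {S : Finset (Sym2 V)} {e : Sym2 V} :
    e ∈ activeEdges G S ↔
      e ∈ S ∧ (PendantEdge G e ∨ TypeI G e ∧ ∃ z ∈ e, z ∈ onlyInc G ↑S) := by
  simp [activeEdges]

lemma mem_remoteVertices {S : Finset (Sym2 V)} {v : V} :
    v ∈ remoteVertices G S ↔ ¬ OnPendantOrTypeIEdge G v ∧ v ∈ onlyInc G ↑S := by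
  simp [remoteVertices]

lemma activeEdges_subset (S : Finset (Sym2 V)) : activeEdges G S ⊆ S :=
  fun _ he => (mem_activeEdges.mp he).1

lemma activeEdges_mono {S T : Finset (Sym2 V)} (h : S ⊆ T) :
    activeEdges G S ⊆ activeEdges G T := by
  intro e he
  obtain ⟨heS, hp | ⟨ht, z, hz, hzS⟩⟩ := mem_activeEdges.mp he
  exacts [mem_activeEdges.mpr ⟨h heS, Or.inl hp⟩, mem_activeEdges.mpr
    ⟨h heS, Or.inr ⟨ht, z, hz, onlyInc_mono (coe_subset.mpr h) hzS⟩⟩]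

lemma remoteVertices_mono {S T : Finset (Sym2 V)} (h : S ⊆ T) :
    remoteVertices G S ⊆ remoteVertices G T := fun _ hv =>
  mem_remoteVertices.mpr ⟨(mem_remoteVertices.mp hv).1,
    onlyInc_mono (coe_subset.mpr h) (mem_remoteVertices.mp hv).2⟩

lemma mem_edgeSet_of_mem_activeEdges {S : Finset (Sym2 V)} {e : Sym2 V}
    (he : e ∈ activeEdges G S) : e ∈ G.edgeSet :=
  (mem_activeEdges.mp he).2.elim (·.1) (·.1.1)

lemma gammaIS_le (S : Finset (Sym2 V)) :
    gammaIS G S ≤ (activeEdges G S).card + (remoteVertices G S).card := by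
  classical
  refine alphaOn_le fun J hJ hind => ?_
  rw [← card_filter_add_card_filter_not (OnPendantOrTypeIEdge G)]
  refine add_le_add ((hind.mono (filter_subset _ _)).card_le_card_of_forall_exists_mem
    (fun _ => mem_edgeSet_of_mem_activeEdges) ?_)
    (card_le_card fun v hv => ?_)
  · intro v hv
    obtain ⟨hvJ, e, hpt, hve⟩ := mem_filter.mp hv
    have hvS : v ∈ onlyInc G ↑S := hJ hvJ
    have heS : e ∈ S := hvS ⟨hpt.elim (·.1) (·.1), hve⟩
    exact ⟨e, mem_activeEdges.mpr ⟨heS, hpt.imp_right fun ht => ⟨ht, v, hve, hvS⟩⟩, hve⟩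
  · obtain ⟨hvJ, hv⟩ := mem_filter.mp hv
    exact mem_remoteVertices.mpr ⟨hv, hJ hvJ⟩

variable (G) in
def Represents (z : V) (e : Sym2 V) : Prop :=
  z ∈ e ∧ (PendantEdge G e ∧ G.degree z = 1 ∨ TypeI G e)

lemma exists_represents_of_mem_activeEdges {S : Finset (Sym2 V)} {e : Sym2 V}
    (he : e ∈ activeEdges G S) : ∃ z, Represents G z e ∧ z ∈ onlyInc G ↑S := by
  obtain ⟨heS, hp | ⟨ht, z, hz, hzS⟩⟩ := mem_activeEdges.mp he
  · have ⟨hE, p, hpe, hp1⟩ := hp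
    refine ⟨p, ⟨hpe, Or.inl ⟨hp, hp1⟩⟩, fun f hf => ?_⟩
    rw [eq_of_mem_incEdges_of_degree_eq_one hp1 hf ⟨hE, hpe⟩]
    exact heS
  · exact ⟨z, ⟨hz, Or.inr ht⟩, hzS⟩

namespace Represents

variable {z u v : V} {e f : Sym2 V}

lemma mem_edgeSet (h : Represents G z e) : e ∈ G.edgeSet :=
  h.2.elim (·.1.1) (·.1)

lemma onPendantOrTypeIEdge (h : Represents G z e) : OnPendantOrTypeIEdge G z :=
  ⟨e, h.2.imp_left And.left, h.1⟩

lemma not_isSupport_or_degree_eq_one (h : Represents G z e) :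
    ¬ IsSupport G z ∨ G.degree z = 1 :=
  h.2.elim (fun hp => Or.inr hp.2) fun ht => Or.inl (ht.not_isSupport h.1)

lemma eq (hii : TypeIEdgesDisjoint G) (he : Represents G z e) (hf : Represents G z f) :
    e = f := by
  rcases he.2 with ⟨-, hz1⟩ | hte
  · exact eq_of_mem_incEdges_of_degree_eq_one hz1 ⟨he.mem_edgeSet, he.1⟩ ⟨hf.mem_edgeSet, hf.1⟩
  rcases hf.2 with ⟨-, hz1⟩ | htf
  · exact eq_of_mem_incEdges_of_degree_eq_one hz1 ⟨he.mem_edgeSet, he.1⟩ ⟨hf.mem_edgeSet, hf.1⟩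
  exact hii hte htf he.1 hf.1

lemma eq_of_adj (hii : TypeIEdgesDisjoint G) (h : Represents G z e) (hzv : G.Adj z v)
    (hv : ¬ IsSupport G v ∨ G.degree v = 1) : e = s(z, v) := by
  rcases h.2 with ⟨hp, hz1⟩ | ht
  · exact eq_of_mem_incEdges_of_degree_eq_one hz1 ⟨hp.1, h.1⟩ (adj_mem_incEdges hzv)
  have hv1 : G.degree v ≠ 1 := fun h1 => ht.not_isSupport h.1 ⟨v, hzv, h1⟩
  exact hii ht ((typeI_iff hzv).mpr ⟨ht.degree_ne_one h.1, hv1, ht.not_isSupport h.1,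
    hv.resolve_right hv1⟩) h.1 (Sym2.mem_mk_left z v)

lemma not_adj (hii : TypeIEdgesDisjoint G) (hu : Represents G u e) (hv : Represents G v f)
    (hef : e ≠ f) : ¬ G.Adj u v := fun h =>
  hef ((hu.eq_of_adj hii h hv.not_isSupport_or_degree_eq_one).trans
    (Sym2.eq_swap.trans (hv.eq_of_adj hii h.symm hu.not_isSupport_or_degree_eq_one).symm))

lemma not_adj_of_not_onPendantOrTypeIEdge (hii : TypeIEdgesDisjoint G) (hu : Represents G u e)
    (hv : ¬ OnPendantOrTypeIEdge G v) : ¬ G.Adj u v := fun h =>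
  hv ⟨e, hu.2.imp_left And.left,
    hu.eq_of_adj hii h (Or.inl fun hs => hv (onPendantOrTypeIEdge_of_isSupport hs)) ▸
      Sym2.mem_mk_right u v⟩

end Represents

lemma not_adj_of_not_onPendantOrTypeIEdge {u v : V} (hu : ¬ OnPendantOrTypeIEdge G u)
    (hv : ¬ OnPendantOrTypeIEdge G v) : ¬ G.Adj u v := fun h =>
  hv (onPendantOrTypeIEdge_of_adj h fun hs => hu (onPendantOrTypeIEdge_of_isSupport hs))

lemma card_add_card_le_gammaIS (hii : TypeIEdgesDisjoint G) (S : Finset (Sym2 V)) :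
    (activeEdges G S).card + (remoteVertices G S).card ≤ gammaIS G S := by
  classical
  set A := activeEdges G S
  set R := remoteVertices G S
  choose φ hφ hφS using fun e : A => exists_represents_of_mem_activeEdges e.2
  have hφ_inj : Function.Injective φ := fun e f hef =>
    Subtype.ext ((hφ e).eq hii (hef ▸ hφ f))
  have hR : ∀ v ∈ R, ¬ OnPendantOrTypeIEdge G v := fun v hv => (mem_remoteVertices.mp hv).1
  have hind : Indep G (univ.image φ ∪ R) := by
    intro u hu v hv
    simp only [mem_union, mem_image, mem_univ, true_and] at hu hv
    rcases hu with ⟨e, rfl⟩ | hu <;> rcases hv with ⟨f, rfl⟩ | hv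
    · by_cases hef : e = f
      · rw [hef]
        exact G.irrefl
      exact (hφ e).not_adj hii (hφ f) (Subtype.coe_ne_coe.mpr hef)
    · exact (hφ e).not_adj_of_not_onPendantOrTypeIEdge hii (hR v hv)
    · exact fun h => (hφ f).not_adj_of_not_onPendantOrTypeIEdge hii (hR u hu) h.symm
    · exact not_adj_of_not_onPendantOrTypeIEdge (hR u hu) (hR v hv)
  have hdisj : Disjoint (univ.image φ) R := disjoint_left.mpr fun v hv hvR => by
    obtain ⟨e, -, rfl⟩ := mem_image.mp hv
    exact hR _ hvR (hφ e).onPendantOrTypeIEdge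
  have hsub : ↑(univ.image φ ∪ R) ⊆ onlyInc G ↑S := by
    intro v hv
    rcases mem_union.mp hv with hv | hv
    · obtain ⟨e, -, rfl⟩ := mem_image.mp hv
      exact hφS e
    · exact (mem_remoteVertices.mp hv).2
  calc A.card + R.card = (univ.image φ ∪ R).card := by
        rw [card_union_of_disjoint hdisj, card_image_of_injective _ hφ_inj, card_univ,
          Fintype.card_coe]
    _ ≤ gammaIS G S := le_alphaOn hsub hind

lemma gammaIS_eq (hii : TypeIEdgesDisjoint G) (S : Finset (Sym2 V)) :
    gammaIS G S = (activeEdges G S).card + (remoteVertices G S).card :=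
  le_antisymm (gammaIS_le S) (card_add_card_le_gammaIS hii S)

variable (G) in
noncomputable def allocation (ch : V → Sym2 V) (S : Finset (Sym2 V)) (g : Sym2 V) : ℝ :=
  (if g ∈ activeEdges G S then 1 else 0) + ((remoteVertices G S).filter (ch · = g)).card

lemma allocation_nonneg (ch : V → Sym2 V) (S : Finset (Sym2 V)) (g : Sym2 V) :
    0 ≤ allocation G ch S g := by
  unfold allocation
  positivity

lemma allocation_mono (ch : V → Sym2 V) {S T : Finset (Sym2 V)} (h : S ⊆ T) (g : Sym2 V) :
    allocation G ch S g ≤ allocation G ch T g := by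
  unfold allocation
  gcongr
  · split_ifs with hS hT
    exacts [le_rfl, absurd (activeEdges_mono h hS) hT, zero_le_one, le_rfl]
  · exact remoteVertices_mono h

lemma sum_allocation {ch : V → Sym2 V} (hch : ∀ v, ch v ∈ incEdges G v) (S : Finset (Sym2 V)) :
    ∑ g ∈ S, allocation G ch S g = (activeEdges G S).card + (remoteVertices G S).card := by
  have hR : ∀ v ∈ remoteVertices G S, ch v ∈ S := fun v hv => (mem_remoteVertices.mp hv).2 (hch v)
  simp only [allocation, sum_add_distrib, sum_boole, filter_mem_eq_inter,
    inter_eq_right.mpr (activeEdges_subset S), ← Nat.cast_sum, ← card_eq_sum_card_fiberwise hR]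

lemma isPMAS_allocation (hii : TypeIEdgesDisjoint G) {ch : V → Sym2 V}
    (hch : ∀ v, ch v ∈ incEdges G v) : IsPMAS G (allocation G ch) :=
  ⟨fun S _ g _ => allocation_nonneg ch S g,
    fun S _ _ => by rw [sum_allocation hch, gammaIS_eq hii]; push_cast; rfl,
    fun _ _ hST _ _ g _ => allocation_mono ch hST g⟩

end Sufficiency

section Necessity

lemma IsPMAS.eq_zero_of_gammaIS_eq {x : Finset (Sym2 V) → Sym2 V → ℝ} (hx : IsPMAS G x)
    {S T R : Finset (Sym2 V)} (hST : S ⊆ T) (hT : T ⊆ G.edgeFinset) (hS : S.Nonempty)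
    (hγ : gammaIS G T = gammaIS G S) (hRT : R ⊆ T) {i : Sym2 V} (hiR : i ∈ R)
    (hiS : i ∉ S) : x R i = 0 := by
  obtain ⟨hnn, heff, hmono⟩ := hx
  have hnn' : ∀ j ∈ T \ S, 0 ≤ x T j := fun j hj => hnn T hT j (mem_sdiff.mp hj).1
  have hsum : ∑ j ∈ T \ S, x T j = 0 := by
    have hsplit := sum_sdiff (f := x T) hST
    have hle : ∑ j ∈ S, x S j ≤ ∑ j ∈ S, x T j := sum_le_sum (hmono S T hST hT hS)
    have hT' := heff T hT (hS.mono hST)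
    have hS' := heff S (hST.trans hT) hS
    rw [hγ] at hT'
    linarith [sum_nonneg hnn']
  have hiT : x T i = 0 := (sum_eq_zero_iff_of_nonneg hnn').mp hsum i (mem_sdiff.mpr ⟨hRT hiR, hiS⟩)
  exact le_antisymm (hiT ▸ hmono R T hRT hT ⟨i, hiR⟩ i hiR) (hnn R (hRT.trans hT) i hiR)

lemma not_isPMAS_of_gammaIS_union_eq {a b c : V} (hab : G.Adj a b) (hbc : G.Adj b c)
    (hac : a ≠ c)
    (ha : gammaIS G (incFinset G a ∪ incFinset G b) = gammaIS G (incFinset G a))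
    (hc : gammaIS G (incFinset G c ∪ incFinset G b) = gammaIS G (incFinset G c))
    (hb : gammaIS G (incFinset G b) ≠ 0) (x : Finset (Sym2 V) → Sym2 V → ℝ) :
    ¬ IsPMAS G x := by
  intro hx
  have hT : ∀ u, incFinset G u ∪ incFinset G b ⊆ G.edgeFinset := fun u =>
    union_subset (incFinset_subset_edgeFinset u) (incFinset_subset_edgeFinset b)
  have hzero : ∀ g ∈ incFinset G b, x (incFinset G b) g = 0 := by
    intro g hg
    by_cases hga : g ∈ incFinset G a
    · have hgab : g = s(a, b) := (Sym2.mem_and_mem_iff hab.ne).mp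
        ⟨(mem_incFinset.mp hga).2, (mem_incFinset.mp hg).2⟩
      have hgc : g ∉ incFinset G c := by
        intro hgc
        have hcg := (mem_incFinset.mp hgc).2
        rw [hgab, Sym2.mem_iff] at hcg
        rcases hcg with rfl | rfl
        exacts [hac rfl, hbc.ne rfl]
      exact hx.eq_zero_of_gammaIS_eq subset_union_left (hT c)
        ⟨_, mem_incFinset.mpr (adj_mem_incEdges hbc.symm)⟩ hc subset_union_right hg hgc
    · exact hx.eq_zero_of_gammaIS_eq subset_union_left (hT a)
        ⟨_, mem_incFinset.mpr (adj_mem_incEdges hab)⟩ ha subset_union_right hg hga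
  have heff := hx.2.1 _ (incFinset_subset_edgeFinset b)
    ⟨_, mem_incFinset.mpr (adj_mem_incEdges hbc)⟩
  rw [sum_eq_zero hzero] at heff
  exact hb (by exact_mod_cast heff.symm)

lemma onlyInc_incEdges_subset (hiso : ∀ v : V, G.degree v ≠ 0) {t : V}
    (ht : ¬ IsSupport G t) : onlyInc G (incEdges G t) ⊆ {t} := by
  intro z hz
  rw [Set.mem_singleton_iff]
  by_contra hzt
  refine ht (isSupport_of_forall_adj_eq hiso (z := z) fun y hy => ?_)
  exact ((Sym2.mem_iff.mp (hz (adj_mem_incEdges hy)).2).resolve_left (Ne.symm hzt)).symm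

lemma gammaIS_incFinset (hiso : ∀ v : V, G.degree v ≠ 0) {t : V} (ht : ¬ IsSupport G t) :
    gammaIS G (incFinset G t) = 1 := by
  rw [gammaIS, coe_incFinset]
  exact alphaOn_eq_one_of_isClique ⟨t, fun _ he => he⟩
    ((Set.subsingleton_singleton.anti (onlyInc_incEdges_subset hiso ht)).pairwise _)

variable (G) in
def hanging (a b : V) : Set V :=
  {z | z ≠ a ∧ z ≠ b ∧ ∀ y, G.Adj z y → y = a ∨ y = b}

lemma hanging_comm (a b : V) : hanging G a b = hanging G b a := by
  ext z
  simp only [hanging, Set.mem_ofPred_eq, or_comm (a := _ = a)]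
  tauto

lemma onlyInc_union_incEdges {a b : V} (hab : G.Adj a b) :
    onlyInc G (incEdges G a ∪ incEdges G b) = insert a (insert b (hanging G a b)) := by
  ext z
  simp only [onlyInc, Set.mem_ofPred_eq, Set.mem_insert_iff]
  constructor
  · intro hz
    by_cases hza : z = a
    · exact Or.inl hza
    by_cases hzb : z = b
    · exact Or.inr (Or.inl hzb)
    refine Or.inr (Or.inr ⟨hza, hzb, fun y hy => ?_⟩)
    rcases hz (adj_mem_incEdges hy) with h | h
    · exact Or.inl ((Sym2.mem_iff.mp h.2).resolve_left (Ne.symm hza)).symm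
    · exact Or.inr ((Sym2.mem_iff.mp h.2).resolve_left (Ne.symm hzb)).symm
  · rintro (rfl | rfl | hz)
    · exact Set.subset_union_left
    · exact Set.subset_union_right
    · rintro e ⟨he, hze⟩
      obtain ⟨y, rfl⟩ := Sym2.mem_iff_exists.mp hze
      rcases hz.2.2 y he with rfl | rfl
      exacts [Or.inl ⟨he, Sym2.mem_mk_right z y⟩, Or.inr ⟨he, Sym2.mem_mk_right z y⟩]

lemma adj_of_mem_hanging (hiso : ∀ v : V, G.degree v ≠ 0) {a b z : V}
    (ha : ¬ IsSupport G a) (hb : ¬ IsSupport G b) (hz : z ∈ hanging G a b) :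
    G.Adj z a ∧ G.Adj z b := by
  constructor
  · by_contra hza
    exact hb (isSupport_of_forall_adj_eq hiso fun y hy =>
      (hz.2.2 y hy).resolve_left fun hya => hza (hya ▸ hy))
  · by_contra hzb
    exact ha (isSupport_of_forall_adj_eq hiso fun y hy =>
      (hz.2.2 y hy).resolve_right fun hyb => hzb (hyb ▸ hy))

lemma not_isSupport_of_mem_hanging {a b z : V} (ha : G.degree a ≠ 1) (hb : G.degree b ≠ 1)
    (hz : z ∈ hanging G a b) : ¬ IsSupport G z := by
  rintro ⟨p, hzp, hp⟩
  rcases hz.2.2 p hzp with rfl | rfl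
  exacts [ha hp, hb hp]

lemma hanging_subsingleton_of_mem (hiso : ∀ v : V, G.degree v ≠ 0) {a b z : V}
    (ha : ¬ IsSupport G a) (hz : z ∈ hanging G a b) (hzs : ¬ IsSupport G z) :
    (hanging G a z).Subsingleton :=
  Set.subsingleton_singleton.anti fun y hy =>
    (hz.2.2 y (adj_of_mem_hanging hiso ha hzs hy).2.symm).resolve_left hy.1

lemma gammaIS_incFinset_union (hiso : ∀ v : V, G.degree v ≠ 0) {a b : V} (hab : G.Adj a b)
    (ha : ¬ IsSupport G a) (hb : ¬ IsSupport G b) (hZ : (hanging G a b).Subsingleton) :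
    gammaIS G (incFinset G a ∪ incFinset G b) = 1 := by
  have hadj := fun z hz => adj_of_mem_hanging hiso ha hb (z := z) hz
  rw [gammaIS, coe_union, coe_incFinset, coe_incFinset, onlyInc_union_incEdges hab]
  refine alphaOn_eq_one_of_isClique (Set.insert_nonempty _ _) ?_
  rw [SimpleGraph.isClique_insert, SimpleGraph.isClique_insert]
  refine ⟨⟨hZ.pairwise _, fun z hz _ => (hadj z hz).2.symm⟩, ?_⟩
  rintro z (rfl | hz) -
  exacts [hab, (hadj z hz).1.symm]

lemma not_isPMAS_of_hanging_subsingleton (hiso : ∀ v : V, G.degree v ≠ 0) {a b c : V}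
    (hab : G.Adj a b) (hbc : G.Adj b c) (hac : a ≠ c) (ha : ¬ IsSupport G a)
    (hb : ¬ IsSupport G b) (hc : ¬ IsSupport G c) (hZab : (hanging G a b).Subsingleton)
    (hZbc : (hanging G b c).Subsingleton) (x : Finset (Sym2 V) → Sym2 V → ℝ) :
    ¬ IsPMAS G x := by
  rw [hanging_comm] at hZbc
  refine not_isPMAS_of_gammaIS_union_eq hab hbc hac ?_ ?_ ?_ x
  · rw [gammaIS_incFinset_union hiso hab ha hb hZab, gammaIS_incFinset hiso ha]
  · rw [gammaIS_incFinset_union hiso hbc.symm hc hb hZbc, gammaIS_incFinset hiso hc]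
  · rw [gammaIS_incFinset hiso hb]
    exact one_ne_zero

lemma not_isPMAS_of_mem_hanging (hiso : ∀ v : V, G.degree v ≠ 0) {a b z : V} (hab : a ≠ b)
    (ha1 : G.degree a ≠ 1) (hb1 : G.degree b ≠ 1) (ha : ¬ IsSupport G a)
    (hb : ¬ IsSupport G b) (hz : z ∈ hanging G a b) (x : Finset (Sym2 V) → Sym2 V → ℝ) :
    ¬ IsPMAS G x := by
  have hzs := not_isSupport_of_mem_hanging ha1 hb1 hz
  have hadj := adj_of_mem_hanging hiso ha hb hz
  have hZbz := hanging_subsingleton_of_mem hiso hb (hanging_comm (G := G) a b ▸ hz) hzs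
  rw [hanging_comm] at hZbz
  exact not_isPMAS_of_hanging_subsingleton hiso hadj.1.symm hadj.2 hab ha hzs hb
    (hanging_subsingleton_of_mem hiso ha hz hzs) hZbz x

lemma typeIEdgesDisjoint_of_isPMAS (hiso : ∀ v : V, G.degree v ≠ 0)
    {x : Finset (Sym2 V) → Sym2 V → ℝ} (hx : IsPMAS G x) : TypeIEdgesDisjoint G := by
  intro e f w he hf hwe hwf
  by_contra hef
  obtain ⟨a, rfl⟩ := Sym2.mem_iff_exists.mp hwe
  obtain ⟨c, rfl⟩ := Sym2.mem_iff_exists.mp hwf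
  have hwa : G.Adj w a := he.1
  have hwc : G.Adj w c := hf.1
  have hac : a ≠ c := by
    rintro rfl
    exact hef rfl
  have hw := Sym2.mem_mk_left w a
  have ha := Sym2.mem_mk_right w a
  have hc := Sym2.mem_mk_right w c
  rcases (hanging G a w).eq_empty_or_nonempty with hZaw | ⟨z, hz⟩
  swap
  · exact not_isPMAS_of_mem_hanging hiso hwa.ne' (he.degree_ne_one ha) (he.degree_ne_one hw)
      (he.not_isSupport ha) (he.not_isSupport hw) hz x hx
  rcases (hanging G w c).eq_empty_or_nonempty with hZwc | ⟨z, hz⟩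
  swap
  · exact not_isPMAS_of_mem_hanging hiso hwc.ne (he.degree_ne_one hw) (hf.degree_ne_one hc)
      (he.not_isSupport hw) (hf.not_isSupport hc) hz x hx
  exact not_isPMAS_of_hanging_subsingleton hiso hwa.symm hwc hac (he.not_isSupport ha)
    (he.not_isSupport hw) (hf.not_isSupport hc) (hZaw ▸ Set.subsingleton_empty)
    (hZwc ▸ Set.subsingleton_empty) x hx

lemma nearPendant_of_typeIEdgesDisjoint (hiso : ∀ v : V, G.degree v ≠ 0)
    (hii : TypeIEdgesDisjoint G) (v : V) : NearPendant G v := by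
  by_contra hfar
  have hv1 : G.degree v ≠ 1 := fun h => hfar ⟨v, h, .nil, by simp⟩
  have hnbr1 : ∀ a, G.Adj v a → G.degree a ≠ 1 := fun a ha h =>
    hfar ⟨a, h, .cons ha .nil, by simp⟩
  have hnbr2 : ∀ a, G.Adj v a → ¬ IsSupport G a := fun a ha ⟨p, hap, hp⟩ =>
    hfar ⟨p, hp, .cons ha (.cons hap .nil), by simp⟩
  have hvs : ¬ IsSupport G v := fun ⟨p, hvp, hp⟩ => hnbr1 p hvp hp
  have htI : ∀ a, G.Adj v a → TypeI G s(v, a) := fun a ha =>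
    (typeI_iff ha).mpr ⟨hv1, hnbr1 a ha, hvs, hnbr2 a ha⟩
  have hdeg : 1 < (G.neighborFinset v).card := by
    have := hiso v
    rw [← G.card_neighborFinset_eq_degree] at hv1 this
    omega
  obtain ⟨a, ha, b, hb, hab⟩ := one_lt_card.mp hdeg
  rw [SimpleGraph.mem_neighborFinset] at ha hb
  exact hab (Sym2.congr_right.mp
    (hii (htI a ha) (htI b hb) (Sym2.mem_mk_left v a) (Sym2.mem_mk_left v b)))

end Necessity

/-- Theorem 1 of the paper.  The independent set game on a graph
`G` with no isolated vertices is population monotonic if and only if (i) every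
vertex has distance at most two to a pendant vertex, and (ii) no two distinct
non-pendant edges of type I are incident. -/
theorem stmt_9 (G : SimpleGraph V) [DecidableRel G.Adj]
    (hiso : ∀ v : V, G.degree v ≠ 0) :
    (∃ x : Finset (Sym2 V) → Sym2 V → ℝ, IsPMAS G x) ↔
      ((∀ v : V, NearPendant G v) ∧
        (∀ e f : Sym2 V, TypeI G e → TypeI G f → e ≠ f →
          ¬ ∃ w : V, w ∈ e ∧ w ∈ f)) := by
  constructor
  · rintro ⟨x, hx⟩
    have hii := typeIEdgesDisjoint_of_isPMAS hiso hx
    exact ⟨nearPendant_of_typeIEdgesDisjoint hiso hii, typeIEdgesDisjoint_iff.mp hii⟩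
  · rintro ⟨-, hii⟩
    choose nbr hnbr using fun v => (G.degree_pos_iff_exists_adj v).mp (Nat.pos_of_ne_zero (hiso v))
    exact ⟨allocation G fun v => s(v, nbr v),
      isPMAS_allocation (typeIEdgesDisjoint_iff.mpr hii) fun v => adj_mem_incEdges (hnbr v)⟩
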